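/- Let n ≥ 1, let a, b ∈ ℤ, and let I = (i_1,…,i_r) be a partition of n into positive parts. Then A(a,I) − A(b,I) + A'(b−a,I) = 0. (This is the Chern-number form of Proposition 2.7(iii): the relation [P^n(a)] − [P^n(b)] + [P^n(b−a), c_𝒯(b−a)] = 0 holds in the unitary bordism ring Ω_*^U, since by the Milnor–Novikov theorem a bordism class in Ω_*^U is determined by its Chern numbers.) -/

import Mathlib

open MvPolynomial Finset

/-- `x = X 0` in `ℤ[x,y]`. -/
noncomputable def xv : MvPolynomial (Fin 2) ℤ := MvPolynomial.X 0

/-- `y = X 1` in `ℤ[x,y]`. -/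
noncomputable def yv : MvPolynomial (Fin 2) ℤ := MvPolynomial.X 1

/-- The `i`-th Chern class `c_i(a)` of the tangent bundle of `P^n(a)`:
`C(n,i)·y^i + (2·C(n,i−1) − a·C(n−1,i−1))·x·y^{i−1}`. -/
noncomputable def chern (n : ℕ) (a : ℤ) (i : ℕ) : MvPolynomial (Fin 2) ℤ :=
  MvPolynomial.C (n.choose i : ℤ) * yv ^ i
    + MvPolynomial.C (2 * (n.choose (i - 1) : ℤ) - a * ((n - 1).choose (i - 1) : ℤ))
      * xv * yv ^ (i - 1)

/-- Coefficient of the monomial `x·y^{n-1}`. -/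
noncomputable def coeffXY (n : ℕ) (f : MvPolynomial (Fin 2) ℤ) : ℤ :=
  f.coeff (Finsupp.single (0 : Fin 2) 1 + Finsupp.single (1 : Fin 2) (n - 1))

/-- Coefficient of the monomial `y^n`. -/
noncomputable def coeffY (n : ℕ) (f : MvPolynomial (Fin 2) ℤ) : ℤ :=
  f.coeff (Finsupp.single (1 : Fin 2) n)

/-- The Chern number `A(a,I) = coeff_{x·y^{n−1}}(∏ c_{i_q}(a)) + a·coeff_{y^n}(∏ c_{i_q}(a))`. -/
noncomputable def chernNum (n : ℕ) (a : ℤ) {r : ℕ} (i : Fin r → ℕ) : ℤ :=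
  coeffXY n (∏ q, chern n a (i q)) + a * coeffY n (∏ q, chern n a (i q))

/-- The `i`-th Chern class `c'_i(a)` of the non-standard stably complex structure
`c_𝒯(a)` on `P^n(a)`: `C(n,i)·y^i − a·C(n−1,i−1)·x·y^{i−1}`. -/
noncomputable def chern' (n : ℕ) (a : ℤ) (i : ℕ) : MvPolynomial (Fin 2) ℤ :=
  MvPolynomial.C (n.choose i : ℤ) * yv ^ i
    - MvPolynomial.C (a * ((n - 1).choose (i - 1) : ℤ)) * xv * yv ^ (i - 1)

/-- The Chern number `A'(a,I)` of `(P^n(a), c_𝒯(a))`. -/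
noncomputable def chernNum' (n : ℕ) (a : ℤ) {r : ℕ} (i : Fin r → ℕ) : ℤ :=
  coeffXY n (∏ q, chern' n a (i q)) + a * coeffY n (∏ q, chern' n a (i q))

/-! Each Chern class above has the shape `u + x·e` with `u = C(n,i)·y^i` free of `x`, and neither
coefficient read off by `A` or `A'` sees multiples of `x²`. Modulo `x²`,
`∏ (u_q + x·e_q) = ∏ u_q + x·∑_q e_q ∏_{p≠q} u_p`, and `∏ u_q` is a constant times a power of `y`,
so it has no `x·y^{n-1}` coefficient. Writing `e_q = β_q·y^{i_q-1}`, a Chern number therefore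
equals `∑_q β_q κ_q + a·λ` with `κ_q`, `λ` independent of the structure: it is linear in `(β, a)`.
The relation follows from `β(a) − β(b) + β'(b − a) = 0` and `a − b + (b − a) = 0`. -/

theorem Finset.sq_dvd_prod_add_mul_sub {ι R : Type*} [DecidableEq ι] [CommRing R] (x : R)
    (u e : ι → R) (s : Finset ι) :
    x ^ 2 ∣ ∏ q ∈ s, (u q + x * e q)
      - (∏ q ∈ s, u q + x * ∑ q ∈ s, e q * ∏ p ∈ s.erase q, u p) := by
  induction s using Finset.induction_on with
  | empty => simp
  | insert q s hq ih =>
    have hfirst : ∑ p ∈ insert q s, e p * ∏ t ∈ (insert q s).erase p, u t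
        = e q * ∏ t ∈ s, u t + u q * ∑ p ∈ s, e p * ∏ t ∈ s.erase p, u t := by
      rw [sum_insert hq, erase_insert hq, mul_sum]
      congr 1
      refine sum_congr rfl fun p hp => ?_
      rw [erase_insert_of_ne (ne_of_mem_of_not_mem hp hq).symm,
        prod_insert fun h => hq (mem_of_mem_erase h)]
      ring
    rw [prod_insert hq, prod_insert hq, hfirst]
    have hsplit : (u q + x * e q) * ∏ p ∈ s, (u p + x * e p)
        - (u q * ∏ p ∈ s, u p + x * (e q * ∏ p ∈ s, u p
          + u q * ∑ p ∈ s, e p * ∏ t ∈ s.erase p, u t))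
        = (u q + x * e q) * (∏ p ∈ s, (u p + x * e p)
            - (∏ p ∈ s, u p + x * ∑ p ∈ s, e p * ∏ t ∈ s.erase p, u t))
          + x ^ 2 * (e q * ∑ p ∈ s, e p * ∏ t ∈ s.erase p, u t) := by
      ring
    rw [hsplit]
    exact dvd_add (dvd_mul_of_dvd_right ih _) (dvd_mul_right _ _)

section

variable (n : ℕ)

theorem coeffY_eq_zero_of_xv_dvd {f : MvPolynomial (Fin 2) ℤ} (h : xv ∣ f) : coeffY n f = 0 := by
  obtain ⟨g, rfl⟩ := h
  simp [coeffY, xv, coeff_X_mul']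

theorem coeffXY_eq_zero_of_xv_sq_dvd {f : MvPolynomial (Fin 2) ℤ} (h : xv ^ 2 ∣ f) :
    coeffXY n f = 0 := by
  obtain ⟨g, rfl⟩ := h
  rw [coeffXY, xv, sq, mul_assoc, coeff_X_mul', coeff_X_mul']
  simp

theorem coeffXY_C_mul_yv_pow (c : ℤ) (k : ℕ) : coeffXY n (C c * yv ^ k) = 0 := by
  rw [coeffXY, yv, coeff_C_mul, coeff_X_pow, if_neg, mul_zero]
  intro h
  simpa using DFunLike.congr_fun h 0

theorem coeffY_prod_add_xv_mul {ι : Type*} [DecidableEq ι] (u e : ι → MvPolynomial (Fin 2) ℤ)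
    (s : Finset ι) :
    coeffY n (∏ q ∈ s, (u q + xv * e q)) = coeffY n (∏ q ∈ s, u q) := by
  have h := dvd_add (dvd_trans (dvd_pow_self xv two_ne_zero) (sq_dvd_prod_add_mul_sub xv u e s))
    (dvd_mul_right xv (∑ q ∈ s, e q * ∏ p ∈ s.erase q, u p))
  rw [sub_add_eq_sub_sub, sub_add_cancel] at h
  have := coeffY_eq_zero_of_xv_dvd n h
  rwa [coeffY, coeff_sub, sub_eq_zero] at this

theorem coeffXY_prod_add_xv_mul {ι : Type*} [DecidableEq ι] (α : ι → ℤ) (k : ι → ℕ)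
    (e : ι → MvPolynomial (Fin 2) ℤ) (s : Finset ι) :
    coeffXY n (∏ q ∈ s, (C (α q) * yv ^ k q + xv * e q))
      = coeffXY n (xv * ∑ q ∈ s, e q * ∏ p ∈ s.erase q, C (α p) * yv ^ k p) := by
  have h := coeffXY_eq_zero_of_xv_sq_dvd n
    (sq_dvd_prod_add_mul_sub xv (fun q => C (α q) * yv ^ k q) e s)
  have hmonomial : ∏ q ∈ s, C (α q) * yv ^ k q = C (∏ q ∈ s, α q) * yv ^ ∑ q ∈ s, k q := by
    rw [prod_mul_distrib, map_prod, prod_pow_eq_pow_sum]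
  rwa [coeffXY, coeff_sub, sub_eq_zero, coeff_add, ← coeffXY, ← coeffXY, hmonomial,
    coeffXY_C_mul_yv_pow, zero_add] at h

theorem coeffXY_add_mul_coeffY_prod {ι : Type*} [DecidableEq ι] (c : ℤ) (α β : ι → ℤ)
    (k : ι → ℕ) (g : ι → MvPolynomial (Fin 2) ℤ) (s : Finset ι) :
    coeffXY n (∏ q ∈ s, (C (α q) * yv ^ k q + xv * (C (β q) * g q)))
        + c * coeffY n (∏ q ∈ s, (C (α q) * yv ^ k q + xv * (C (β q) * g q)))
      = ∑ q ∈ s, β q * coeffXY n (xv * g q * ∏ p ∈ s.erase q, C (α p) * yv ^ k p)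
        + c * coeffY n (∏ q ∈ s, C (α q) * yv ^ k q) := by
  rw [coeffXY_prod_add_xv_mul, coeffY_prod_add_xv_mul, mul_sum, coeffXY, coeff_sum]
  congr 1
  refine sum_congr rfl fun q _ => ?_
  rw [show xv * (C (β q) * g q * ∏ p ∈ s.erase q, C (α p) * yv ^ k p)
      = C (β q) * (xv * g q * ∏ p ∈ s.erase q, C (α p) * yv ^ k p) by ring, coeff_C_mul, coeffXY]

end

theorem chernNum_relation_general (n r : ℕ) (i : Fin r → ℕ) (a b : ℤ) :
    chernNum n a i - chernNum n b i + chernNum' n (b - a) i = 0 := by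
  have hchern (c : ℤ) (j : ℕ) : chern n c j = C (n.choose j : ℤ) * yv ^ j
      + xv * (C (2 * n.choose (j - 1) - c * (n - 1).choose (j - 1) : ℤ) * yv ^ (j - 1)) := by
    rw [chern]; ring
  have hchern' (c : ℤ) (j : ℕ) : chern' n c j = C (n.choose j : ℤ) * yv ^ j
      + xv * (C (-(c * (n - 1).choose (j - 1)) : ℤ) * yv ^ (j - 1)) := by
    rw [chern', map_neg]; ring
  simp only [chernNum, chernNum', hchern, hchern', coeffXY_add_mul_coeffY_prod]
  simp only [sub_mul, neg_mul, mul_assoc, sum_sub_distrib, sum_neg_distrib, ← mul_sum]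
  ring

/-- `A(a,I) − A(b,I) + A'(b−a,I) = 0`, the Chern-number form of the
relation `[P^n(a)] − [P^n(b)] + [P^n(b−a), c_𝒯(b−a)] = 0` in `Ω_*^U`
(Proposition 2.7(iii)). -/
theorem chernNum_relation (n r : ℕ) (hn : 1 ≤ n) (hr : 1 ≤ r)
    (i : Fin r → ℕ) (hi : ∀ q, 1 ≤ i q) (hsum : ∑ q, i q = n) (a b : ℤ) :
    chernNum n a i - chernNum n b i + chernNum' n (b - a) i = 0 :=
  chernNum_relation_general n r i a b
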